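/- For every τ ∈ ℚ, the maps S^τ and C commute: S^τ ∘ C = C ∘ S^τ as ℚ-linear endomorphisms of H, where S^τ is the ℚ-algebra endomorphism of H with S^τ(e₀) = e₀ and S^τ(e₁) = e₁ + τe₀, and C is the ℚ-linear endomorphism of H defined on words by C(e_{a₁}⋯e_{a_r}) = ∑_{j=1}^{r} e_{a_{j+1}}⋯e_{a_r}·e_{a₁}⋯e_{a_j} (a₁,…,a_r ∈ {0,1}, with C(1) = 0). -/

import Mathlib

/- STATEMENT 9: S^τ ∘ C = C ∘ S^τ, where S^τ is the algebra endomorphism of H with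
S^τ(e₀)=e₀, S^τ(e₁)=e₁+τe₀, and C is the cyclic-sum operator
C(e_{a₁}⋯e_{a_r}) = ∑_{j=1}^r e_{a_{j+1}}⋯e_{a_r} e_{a₁}⋯e_{a_j}, C(1)=0. -/

noncomputable section

abbrev H : Type := FreeAlgebra ℚ (Fin 2)

def e0 : H := FreeAlgebra.ι ℚ 0
def e1 : H := FreeAlgebra.ι ℚ 1

/-- The word `e_{a₁}⋯e_{a_N}` of a list of letters. -/
def word (l : List (Fin 2)) : H := (l.map (FreeAlgebra.ι ℚ)).prod

/-- The ℚ-algebra endomorphism `S^τ` of `H`: `e₀ ↦ e₀`, `e₁ ↦ e₁ + τ e₀`. -/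
def Stau (τ : ℚ) : H →ₐ[ℚ] H :=
  FreeAlgebra.lift ℚ (fun i : Fin 2 => if i = 0 then e0 else e1 + τ • e0)

/-! On a product `y₁ ⋯ y_r` of elements of the span `V` of the generators, `C` still produces the
cyclic sum `∑ⱼ y_{j+1} ⋯ y_r y₁ ⋯ y_j`: both sides are multilinear in `(y₁, …, y_r)` and agree when
every `yᵢ` is a generator. An algebra endomorphism `φ` with `φ(V) ⊆ V` maps a word to such a product
and commutes with taking cyclic rotations of products, so `φ ∘ C = C ∘ φ` on words, hence on `H`. -/

open FreeAlgebra Submodule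

theorem List.ofFn_comp_finRotate {α : Type*} {n : ℕ} (f : Fin n → α) :
    ofFn (f ∘ finRotate n) = (ofFn f).rotate 1 := by
  cases n with
  | zero => simp
  | succ n =>
    conv_lhs => rw [← Fin.cons_self_tail f, Function.comp_def, ← Fin.snoc_eq_cons_rotate]
    rw [ofFn_succ' (Fin.snoc _ _), ofFn_succ (f := f)]
    simp [Fin.tail]

theorem List.ofFn_comp_finRotate_pow {α : Type*} {n : ℕ} (f : Fin n → α) (k : ℕ) :
    ofFn (f ∘ ⇑(finRotate n ^ k)) = (ofFn f).rotate k := by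
  induction k with
  | zero => simp
  | succ k ih =>
    rw [pow_succ, Equiv.Perm.coe_mul, ← Function.comp_assoc, ofFn_comp_finRotate, ih, rotate_rotate]

section CyclicSum

variable {A : Type*} [Semiring A]

def cyclicSum (l : List A) : A :=
  ∑ j ∈ Finset.range l.length, (l.rotate (j + 1)).prod

theorem cyclicSum_eq_sum_drop_mul_take (l : List A) :
    cyclicSum l = ∑ j ∈ Finset.range l.length, (l.drop (j + 1)).prod * (l.take (j + 1)).prod := by
  refine Finset.sum_congr rfl fun j hj => ?_
  rw [List.rotate_eq_drop_append_take (Finset.mem_range.mp hj), List.prod_append]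

theorem map_cyclicSum {B F : Type*} [Semiring B] [FunLike F A B] [RingHomClass F A B] (f : F)
    (l : List A) : f (cyclicSum l) = cyclicSum (l.map f) := by
  simp only [cyclicSum, map_sum, map_list_prod, List.map_rotate, List.length_map]

variable (R : Type*) [CommSemiring R] [Algebra R A]

def cyclicSumMultilinear (n : ℕ) : MultilinearMap R (fun _ : Fin n => A) A :=
  ∑ j ∈ Finset.range n, (MultilinearMap.mkPiAlgebraFin R n A).domDomCongr (finRotate n ^ (j + 1))

theorem cyclicSumMultilinear_apply {n : ℕ} (v : Fin n → A) :
    cyclicSumMultilinear R n v = cyclicSum (List.ofFn v) := by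
  simp only [cyclicSumMultilinear, sum_apply, MultilinearMap.domDomCongr_apply,
    MultilinearMap.mkPiAlgebraFin_apply, cyclicSum, List.length_ofFn]
  exact Finset.sum_congr rfl fun j _ => by rw [← List.ofFn_comp_finRotate_pow]; rfl

end CyclicSum

namespace FreeAlgebra

variable {R X : Type*} [CommSemiring R]

theorem basisFreeMonoid_apply (m : FreeMonoid X) :
    basisFreeMonoid R X m = (m.toList.map (ι R)).prod := by
  simp [basisFreeMonoid, equivMonoidAlgebraFreeMonoid, FreeMonoid.lift_apply]

def IsCyclicSum (C : FreeAlgebra R X →ₗ[R] FreeAlgebra R X) : Prop :=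
  ∀ l : List X, C (l.map (ι R)).prod = cyclicSum (l.map (ι R))

namespace IsCyclicSum

variable {C : FreeAlgebra R X →ₗ[R] FreeAlgebra R X}

theorem apply_prod_of_mem_span (hC : IsCyclicSum C) {l : List (FreeAlgebra R X)}
    (hl : ∀ y ∈ l, y ∈ span R (Set.range (ι R))) : C l.prod = cyclicSum l := by
  set ψ := Finsupp.linearCombination R (ι R (X := X))
  have hmulti : (C.compMultilinearMap (MultilinearMap.mkPiAlgebraFin R l.length _)).compLinearMap
      (fun _ => ψ) = (cyclicSumMultilinear R l.length).compLinearMap (fun _ => ψ) := by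
    refine Module.Basis.ext_multilinear (fun _ => Finsupp.basisSingleOne) fun a => ?_
    simpa [ψ, cyclicSumMultilinear_apply, List.ofFn_comp'] using hC (List.ofFn a)
  have hrange (i : Fin l.length) : l[i] ∈ LinearMap.range ψ := by
    rw [Finsupp.range_linearCombination]; exact hl _ (List.getElem_mem _)
  choose v hv using hrange
  simpa [ψ, hv, cyclicSumMultilinear_apply] using congr($hmulti v)

theorem commute_algHom (hC : IsCyclicSum C) (φ : FreeAlgebra R X →ₐ[R] FreeAlgebra R X)
    (hφ : ∀ x, φ (ι R x) ∈ span R (Set.range (ι R))) : Commute φ.toLinearMap C := by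
  refine (basisFreeMonoid R X).ext fun m => ?_
  rw [Module.End.mul_apply, Module.End.mul_apply, AlgHom.toLinearMap_apply,
    AlgHom.toLinearMap_apply, basisFreeMonoid_apply, hC, map_cyclicSum, map_list_prod, List.map_map,
    hC.apply_prod_of_mem_span (by simpa using fun x _ => hφ x)]

end IsCyclicSum

end FreeAlgebra

theorem stmt_9 (τ : ℚ)
    (C : H →ₗ[ℚ] H)
    (hC : ∀ l : List (Fin 2),
      C (word l) = ∑ j ∈ Finset.range l.length, word (l.drop (j + 1)) * word (l.take (j + 1))) :
    ∀ x : H, Stau τ (C x) = C (Stau τ x) := by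
  have hcyc : IsCyclicSum C := fun l => by
    simpa [cyclicSum_eq_sum_drop_mul_take, word, List.map_drop, List.map_take] using hC l
  have hStau (i : Fin 2) : Stau τ (ι ℚ i) ∈ span ℚ (Set.range (ι ℚ)) := by
    have he0 : e0 ∈ span ℚ (Set.range (ι ℚ)) := subset_span ⟨0, rfl⟩
    have he1 : e1 ∈ span ℚ (Set.range (ι ℚ)) := subset_span ⟨1, rfl⟩
    fin_cases i
    · simpa [Stau] using he0
    · simpa [Stau] using add_mem he1 (smul_mem _ τ he0)
  exact LinearMap.congr_fun (hcyc.commute_algHom (Stau τ) hStau).eq
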